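/- For every n ≥ 1 and every (i₁,…,iₙ) ∈ {0,1}ⁿ, the matrix M = V·F_{i₁}(e,12,e)⋯F_{iₙ}(e,12,e) has second column (1,1,0)ᵀ, and each of its first and third columns has its second entry equal to its third entry. Consequently the Farey subtriangle Δ_{(e,12,e)}(i₁,…,iₙ) has (1,0) as a vertex and its other two vertices lie on the segment from (0,0) to (1,1); i.e. the (e,(12),e) TRIP map is degenerate, fixing the vertex (1,0) and only partitioning the opposite side of the triangle. -/

import Mathlib

open Matrix MeasureTheory Filter

noncomputable section

/-- Projection π(a,b,c) = (b/a, c/a). -/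
def projPt (v : Fin 3 → ℝ) : ℝ × ℝ := (v 1 / v 0, v 2 / v 0)

def Vmat : Matrix (Fin 3) (Fin 3) ℝ := !![1,1,1; 0,1,1; 0,0,1]

def prodSeq (C : Fin 2 → Matrix (Fin 3) (Fin 3) ℝ) (i : ℕ → Fin 2) :
    ℕ → Matrix (Fin 3) (Fin 3) ℝ
  | 0 => 1
  | n + 1 => prodSeq C i n * C (i (n + 1))

/-- The Farey matrices F₀(e,12,e), F₁(e,12,e). -/
def Fe12e : Fin 2 → Matrix (Fin 3) (Fin 3) ℝ :=
  ![!![0,0,1; 0,1,0; 1,0,1], !![1,0,1; 0,1,0; 0,0,1]]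

/-!
Right multiplication by either Farey matrix `F₀(e,12,e)`, `F₁(e,12,e)` fixes the middle column
and replaces the outer columns `(c₀, c₂)` by `(c₂, c₀ + c₂)`, resp. `(c₀, c₀ + c₂)`. The matrix
`V` has middle column `(1,1,0)` and outer columns in the cone `{(a, b, b) : 0 ≤ b ≤ a, 0 < a}`,
which is closed under addition and which `π` maps into the segment from `(0,0)` to `(1,1)`.
So by induction every product `V·F_{i₁}⋯F_{iₙ}` has this shape.
-/

structure LiesOverDiagonal (v : Fin 3 → ℝ) : Prop where
  pos : 0 < v 0
  nonneg : 0 ≤ v 1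
  le : v 1 ≤ v 0
  eq : v 1 = v 2

theorem LiesOverDiagonal.add {v w : Fin 3 → ℝ} (hv : LiesOverDiagonal v)
    (hw : LiesOverDiagonal w) : LiesOverDiagonal (v + w) where
  pos := by simpa using add_pos hv.pos hw.pos
  nonneg := by simpa using add_nonneg hv.nonneg hw.nonneg
  le := by simpa using add_le_add hv.le hw.le
  eq := by simp [hv.eq, hw.eq]

theorem LiesOverDiagonal.projPt_mem_segment {v : Fin 3 → ℝ} (hv : LiesOverDiagonal v) :
    projPt v ∈ segment ℝ ((0 : ℝ), (0 : ℝ)) ((1 : ℝ), (1 : ℝ)) := by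
  have ht : v 1 / v 0 ∈ Set.Icc (0 : ℝ) 1 :=
    ⟨div_nonneg hv.nonneg hv.pos.le, (div_le_one hv.pos).mpr hv.le⟩
  rw [segment_eq_image_lineMap]
  exact ⟨v 1 / v 0, ht, by simp [projPt, AffineMap.lineMap_apply, ← hv.eq]⟩

structure IsDegenerateFrame (M : Matrix (Fin 3) (Fin 3) ℝ) : Prop where
  col_one : (fun k => M k 1) = ![1, 1, 0]
  col_zero : LiesOverDiagonal fun k => M k 0
  col_two : LiesOverDiagonal fun k => M k 2

theorem isDegenerateFrame_Vmat : IsDegenerateFrame Vmat where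
  col_one := by ext k; fin_cases k <;> rfl
  col_zero := ⟨by simp [Vmat], by simp [Vmat], by simp [Vmat], by simp [Vmat]⟩
  col_two := ⟨by simp [Vmat], by simp [Vmat], by simp [Vmat], by simp [Vmat]⟩

section FareyColumns

variable (M : Matrix (Fin 3) (Fin 3) ℝ) (b : Fin 2) (k : Fin 3)

theorem mul_Fe12e_apply_zero : (M * Fe12e b) k 0 = M k (![2, 0] b) := by
  fin_cases b <;> simp [Matrix.mul_apply, Fin.sum_univ_three, Fe12e]

theorem mul_Fe12e_apply_one : (M * Fe12e b) k 1 = M k 1 := by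
  fin_cases b <;> simp [Matrix.mul_apply, Fin.sum_univ_three, Fe12e]

theorem mul_Fe12e_apply_two : (M * Fe12e b) k 2 = M k 0 + M k 2 := by
  fin_cases b <;> simp [Matrix.mul_apply, Fin.sum_univ_three, Fe12e]

end FareyColumns

theorem IsDegenerateFrame.mul_Fe12e {M : Matrix (Fin 3) (Fin 3) ℝ} (hM : IsDegenerateFrame M)
    (b : Fin 2) : IsDegenerateFrame (M * Fe12e b) where
  col_one := by simpa only [mul_Fe12e_apply_one] using hM.col_one
  col_zero := by
    simp only [mul_Fe12e_apply_zero]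
    fin_cases b
    exacts [hM.col_two, hM.col_zero]
  col_two := by
    simp only [mul_Fe12e_apply_two]
    exact hM.col_zero.add hM.col_two

theorem isDegenerateFrame_Vmat_mul_prodSeq (i : ℕ → Fin 2) (n : ℕ) :
    IsDegenerateFrame (Vmat * prodSeq Fe12e i n) := by
  induction n with
  | zero => simpa [prodSeq] using isDegenerateFrame_Vmat
  | succ n ih => simpa only [prodSeq, ← Matrix.mul_assoc] using ih.mul_Fe12e (i (n + 1))

theorem stmt10 (i : ℕ → Fin 2) (n : ℕ) :
    (Vmat * prodSeq Fe12e i n) 0 1 = 1 ∧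
    (Vmat * prodSeq Fe12e i n) 1 1 = 1 ∧
    (Vmat * prodSeq Fe12e i n) 2 1 = 0 ∧
    (Vmat * prodSeq Fe12e i n) 1 0 = (Vmat * prodSeq Fe12e i n) 2 0 ∧
    (Vmat * prodSeq Fe12e i n) 1 2 = (Vmat * prodSeq Fe12e i n) 2 2 ∧
    projPt (fun k => (Vmat * prodSeq Fe12e i n) k 1) = ((1 : ℝ), (0 : ℝ)) ∧
    projPt (fun k => (Vmat * prodSeq Fe12e i n) k 0)
      ∈ segment ℝ ((0 : ℝ), (0 : ℝ)) ((1 : ℝ), (1 : ℝ)) ∧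
    projPt (fun k => (Vmat * prodSeq Fe12e i n) k 2)
      ∈ segment ℝ ((0 : ℝ), (0 : ℝ)) ((1 : ℝ), (1 : ℝ)) := by
  obtain ⟨col_one, col_zero, col_two⟩ := isDegenerateFrame_Vmat_mul_prodSeq i n
  refine ⟨congrFun col_one 0, congrFun col_one 1, congrFun col_one 2, col_zero.eq, col_two.eq,
    ?_, col_zero.projPt_mem_segment, col_two.projPt_mem_segment⟩
  rw [col_one]
  simp [projPt]
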